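/- arXiv:2305.00372 — 2 statements merged into one kernel-verified Lean document; each statement's English description precedes it below -/
import Mathlib

section
/- Let X and Y be ω-well-filtered spaces and f : X → Y continuous. Then for every closed ω-well-filtered-determined subset A of X, sup A exists in X, sup f(A) exists in Y, and f(sup A) = sup f(A). -/
open Set TopologicalSpace

universe u

section OrderDefs

variable {X : Type u}

/-- `U` is an upper set with respect to the relation `le`. -/
def IsUpperSetWrt (le : X → X → Prop) (U : Set X) : Prop :=
  ∀ ⦃x⦄, x ∈ U → ∀ ⦃y⦄, le x y → y ∈ U

/-- `s` is an upper bound of `D` with respect to `le`. -/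
def IsUBWrt (le : X → X → Prop) (D : Set X) (s : X) : Prop := ∀ d ∈ D, le d s

/-- `s` is a least upper bound (supremum) of `D` with respect to `le`. -/
def IsSupWrt (le : X → X → Prop) (D : Set X) (s : X) : Prop :=
  IsUBWrt le D s ∧ ∀ t, IsUBWrt le D t → le s t

/-- `D` is a (nonempty) directed subset with respect to `le`. -/
def DirectedSubset (le : X → X → Prop) (D : Set X) : Prop :=
  D.Nonempty ∧ ∀ a ∈ D, ∀ b ∈ D, ∃ c ∈ D, le a c ∧ le b c

/-- `U` is Scott open with respect to `le`: an upper set inaccessible by directed suprema. -/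
def ScottOpenWrt (le : X → X → Prop) (U : Set X) : Prop :=
  IsUpperSetWrt le U ∧
    ∀ D, DirectedSubset le D → ∀ s, IsSupWrt le D s → s ∈ U → (D ∩ U).Nonempty

/-- The Scott topology determined by the relation `le`. -/
def scottTop (le : X → X → Prop) : TopologicalSpace X where
  IsOpen := ScottOpenWrt le
  isOpen_univ := by
    refine ⟨fun x _ y _ => trivial, fun D hD s _ _ => ?_⟩
    obtain ⟨d, hd⟩ := hD.1
    exact ⟨d, hd, trivial⟩
  isOpen_inter := by
    rintro U V ⟨hUup, hUd⟩ ⟨hVup, hVd⟩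
    refine ⟨fun x hx y hxy => ⟨hUup hx.1 hxy, hVup hx.2 hxy⟩, ?_⟩
    rintro D hD s hs ⟨hsU, hsV⟩
    obtain ⟨a, haD, haU⟩ := hUd D hD s hs hsU
    obtain ⟨b, hbD, hbV⟩ := hVd D hD s hs hsV
    obtain ⟨c, hcD, hac, hbc⟩ := hD.2 a haD b hbD
    exact ⟨c, hcD, hUup haU hac, hVup hbV hbc⟩
  isOpen_sUnion := by
    intro S hS
    refine ⟨fun x hx y hxy => ?_, ?_⟩
    · obtain ⟨U, hU, hxU⟩ := hx
      exact ⟨U, hU, (hS U hU).1 hxU hxy⟩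
    · rintro D hD s hs ⟨U, hU, hsU⟩
      obtain ⟨d, hdD, hdU⟩ := (hS U hU).2 D hD s hs hsU
      exact ⟨d, hdD, U, hU, hdU⟩

end OrderDefs

section TopDefs

variable {X : Type u} [TopologicalSpace X]

/-- The specialization order of a topological space: `x ≤ y` iff `x ∈ cl {y}`. -/
def specLE (x y : X) : Prop := x ∈ closure ({y} : Set X)

/-- The upward closure of `A` in the specialization order. -/
def upSet (A : Set X) : Set X := {y | ∃ a ∈ A, specLE a y}

/-- `V` is way below `U`: every open cover of `U` admits a finite subfamily covering `V`. -/
def WayBelow (V U : Set X) : Prop :=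
  ∀ S : Set (Set X), (∀ W ∈ S, IsOpen W) → U ⊆ ⋃₀ S →
    ∃ F : Finset (Set X), ↑F ⊆ S ∧ V ⊆ ⋃₀ (F : Set (Set X))

/-- A space is core compact if its lattice of open sets is continuous, i.e. every open
set is the union of the open sets way below it. -/
def CoreCompact (X : Type u) [TopologicalSpace X] : Prop :=
  ∀ U : Set X, IsOpen U → ∀ x ∈ U, ∃ V : Set X, IsOpen V ∧ x ∈ V ∧ WayBelow V U

/-- `V` is open in the core compactly generated topology:
preimages under every continuous map from a core compact space are open. -/
def ccgOpen (X : Type u) [TopologicalSpace X] (V : Set X) : Prop :=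
  ∀ (C : Type u) (tC : TopologicalSpace C), CoreCompact C →
    ∀ ρ : C → X, Continuous ρ → IsOpen (ρ ⁻¹' V)

/-- The core compactly generated topology `𝒞X`. -/
def ccgTopology (X : Type u) [TopologicalSpace X] : TopologicalSpace X where
  IsOpen := ccgOpen X
  isOpen_univ := by intro C tC _ ρ hρ; simpa using isOpen_univ
  isOpen_inter := by
    intro U V hU hV C tC hc ρ hρ
    exact (hU C tC hc ρ hρ).inter (hV C tC hc ρ hρ)
  isOpen_sUnion := by
    intro S hS C tC hc ρ hρ
    rw [preimage_sUnion]
    exact isOpen_biUnion fun t ht => hS t ht C tC hc ρ hρ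

/-- A space is core compactly generated if its topology coincides with the
core compactly generated topology. -/
def CCGenerated (X : Type u) [t : TopologicalSpace X] : Prop := ccgTopology X = t

/-- A set is saturated if it is the intersection of the open sets containing it. -/
def Saturated (K : Set X) : Prop := K = ⋂₀ {U : Set X | IsOpen U ∧ K ⊆ U}

/-- A T₀ space is well-filtered if every filtered family of nonempty compact saturated sets
whose intersection is contained in an open set has a member contained in that open set. -/
def WellFiltered (X : Type u) [TopologicalSpace X] : Prop :=
  T0Space X ∧ ∀ 𝒦 : Set (Set X), 𝒦.Nonempty →
    (∀ K ∈ 𝒦, K.Nonempty ∧ IsCompact K ∧ Saturated K) →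
    (∀ K₁ ∈ 𝒦, ∀ K₂ ∈ 𝒦, ∃ K₃ ∈ 𝒦, K₃ ⊆ K₁ ∧ K₃ ⊆ K₂) →
    ∀ U : Set X, IsOpen U → ⋂₀ 𝒦 ⊆ U → ∃ K ∈ 𝒦, K ⊆ U

/-- A T₀ space is ω-well-filtered if the well-filteredness condition holds for
countable filtered families of nonempty compact saturated sets. -/
def OmegaWellFiltered (X : Type u) [TopologicalSpace X] : Prop :=
  T0Space X ∧ ∀ K : ℕ → Set X,
    (∀ n, (K n).Nonempty ∧ IsCompact (K n) ∧ Saturated (K n)) →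
    (∀ m n, ∃ k, K k ⊆ K m ∧ K k ⊆ K n) →
    ∀ U : Set X, IsOpen U → (⋂ n, K n) ⊆ U → ∃ n, K n ⊆ U

/-- A space is sober if it is T₀ and every irreducible closed set is the closure of a
(unique) point. -/
def SoberSpace (X : Type u) [TopologicalSpace X] : Prop :=
  T0Space X ∧ ∀ A : Set X, IsIrreducible A → IsClosed A → ∃! x : X, A = closure ({x} : Set X)

/-- A T₀ space is a monotone convergence space if the closure of every directed subset
(in the specialization order) is the closure of a point. -/
def MonotoneConvergenceSpace (X : Type u) [TopologicalSpace X] : Prop :=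
  T0Space X ∧ ∀ D : Set X, DirectedSubset specLE D → ∃ x : X, closure D = closure ({x} : Set X)

/-- The hull-kernel style topology on a family of subsets of `X`, generated by the sets
`U^s = {A | A ∩ U ≠ ∅}` for `U` open in `X`. -/
def hullTop (S : Set X → Prop) : TopologicalSpace {A : Set X // S A} :=
  generateFrom {s : Set {A : Set X // S A} |
    ∃ U : Set X, IsOpen U ∧ s = {A : {A : Set X // S A} | ((A : Set X) ∩ U).Nonempty}}

end TopDefs

/-- `A` is an ω-well-filtered determined set (`WD_ω`-set): for every continuous map into
an ω-well-filtered space, the closure of the image of `A` is the closure of a unique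
point. -/
def WDomega (X : Type u) [TopologicalSpace X] (A : Set X) : Prop :=
  ∀ (Z : Type u) (tZ : TopologicalSpace Z), @OmegaWellFiltered Z tZ →
    ∀ g : X → Z, @Continuous X Z _ tZ g →
      ∃! z : Z, @closure Z tZ (g '' A) = @closure Z tZ ({z} : Set Z)

/-! Applied to the identity of `X`, the `WD_ω` property makes the closed set `A` the closure
`↓a` of a single point, so `a` is the greatest element of `A`. Continuous maps preserve the
specialization order, hence `f a` is the greatest element of `f(A)`; a greatest element is a
supremum. -/

theorem isSupWrt_of_isUBWrt_of_mem {X : Type u} {le : X → X → Prop} {D : Set X} {s : X}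
    (hub : IsUBWrt le D s) (hs : s ∈ D) : IsSupWrt le D s :=
  ⟨hub, fun _ ht => ht s hs⟩

section

variable {X Y : Type u} [TopologicalSpace X] [TopologicalSpace Y]

theorem specLE_iff_specializes {x y : X} : specLE x y ↔ y ⤳ x :=
  specializes_iff_mem_closure.symm

theorem isSupWrt_closure_singleton (x : X) : IsSupWrt specLE (closure {x}) x :=
  isSupWrt_of_isUBWrt_of_mem (fun _ hy => hy) (subset_closure rfl)

theorem Continuous.isUBWrt_image {f : X → Y} (hf : Continuous f) {A : Set X} {a : X}
    (ha : IsUBWrt specLE A a) : IsUBWrt specLE (f '' A) (f a) := by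
  rintro - ⟨x, hx, rfl⟩
  exact specLE_iff_specializes.2 ((specLE_iff_specializes.1 (ha x hx)).map hf)

theorem WDomega.exists_eq_closure_singleton (hX : OmegaWellFiltered X) {A : Set X}
    (hA : IsClosed A) (hWD : WDomega X A) : ∃ a : X, A = closure {a} := by
  obtain ⟨a, ha, -⟩ := hWD X ‹_› hX id continuous_id
  exact ⟨a, by rwa [image_id, hA.closure_eq] at ha⟩

end

theorem stmt8_general {X Y : Type u} [TopologicalSpace X] [TopologicalSpace Y]
    (hX : OmegaWellFiltered X)
    (f : X → Y) (hf : Continuous f)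
    (A : Set X) (hA : IsClosed A) (hWD : WDomega X A) :
    ∃ a : X, IsSupWrt (specLE : X → X → Prop) A a ∧
      IsSupWrt (specLE : Y → Y → Prop) (f '' A) (f a) := by
  obtain ⟨a, rfl⟩ := hWD.exists_eq_closure_singleton hX hA
  have hsup := isSupWrt_closure_singleton a
  exact ⟨a, hsup,
    isSupWrt_of_isUBWrt_of_mem (hf.isUBWrt_image hsup.1) ⟨a, subset_closure rfl, rfl⟩⟩

/-- if `X, Y` are ω-well-filtered, `f : X → Y` is continuous, and `A` is a
closed `WD_ω`-subset of `X`, then `sup A` exists, `sup f(A)` exists, and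
`f(sup A) = sup f(A)` (suprema in the specialization orders). -/
theorem stmt8 {X Y : Type u} [TopologicalSpace X] [TopologicalSpace Y]
    (hX : OmegaWellFiltered X) (hY : OmegaWellFiltered Y)
    (f : X → Y) (hf : Continuous f)
    (A : Set X) (hA : IsClosed A) (hWD : WDomega X A) :
    ∃ a : X, IsSupWrt (specLE : X → X → Prop) A a ∧
      IsSupWrt (specLE : Y → Y → Prop) (f '' A) (f a) :=
  stmt8_general hX f hf A hA hWD
end

section
/- Let X be a core compactly generated space. Then the standard ω-well-filterification X^{ω-w} of X is again core compactly generated. -/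
open Set TopologicalSpace

universe u

/-- The standard ω-well-filterification: closed `WD_ω`-sets with the hull-kernel topology. -/
def WFomega (X : Type u) [TopologicalSpace X] := {A : Set X // IsClosed A ∧ WDomega X A}

def wfomegaTop (X : Type u) [TopologicalSpace X] : TopologicalSpace (WFomega X) :=
  hullTop (fun A => IsClosed A ∧ WDomega X A)

/-!
Every open set of `X^{ω-w}` is open in its core compactly generated topology `𝒞`; the converse
rests on `(X^{ω-w}, 𝒞)` being ω-well-filtered. Suppose a descending sequence of `𝒞`-compact
saturated sets `Kₙ` has every `Kₙ \ W` nonempty for a `𝒞`-open `W ⊇ ⋂ Kₙ`. A topological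
Rudin lemma (Zorn's lemma, using compactness of `Kₙ \ W` in the coarser hull topology) gives a
closed `A ⊆ X` minimal such that every `Kₙ \ W` has a member `βₙ ⊆ A`. Minimality makes `A` a
`WD_ω`-set and the limit of `βₙ`; as `𝒞` keeps specializations and convergent sequences (probed by
finite spaces and the one-point compactification of `ℕ`), `A ∈ ⋂ Kₙ ⊆ W` forces `βₙ ∈ W`
eventually, a contradiction.

Since `X` is core compactly generated, `η : X → (X^{ω-w}, 𝒞)` is continuous, and applying the
`WD_ω` property of `A` to `η` shows `A ∈ cl_𝒞 η(A)`. Hence every `𝒞`-open `W` is the basic open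
set `(η⁻¹ W)^{ω-w}`.
-/

open Topology Filter

section CoreCompactlyGenerated

variable {X : Type u} [TopologicalSpace X]

theorem coreCompact_of_locallyCompactSpace [LocallyCompactSpace X] : CoreCompact X := by
  intro U hU x hx
  obtain ⟨K, hKx, hKU, hK⟩ := local_compact_nhds (hU.mem_nhds hx)
  refine ⟨interior K, isOpen_interior, mem_interior_iff_mem_nhds.2 hKx, fun S hS hUS => ?_⟩
  obtain ⟨S', hS'S, hS'fin, hKS'⟩ := hK.elim_finite_subcover_image (c := id) hS
    (by simpa [sUnion_eq_biUnion] using hKU.trans hUS)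
  exact ⟨hS'fin.toFinset, by simp [hS'S],
    by simpa [sUnion_eq_biUnion] using interior_subset.trans hKS'⟩

theorem ccgTopology_le : ccgTopology X ≤ ‹TopologicalSpace X› :=
  TopologicalSpace.le_def.2 fun U hU _ _ _ _ hρ => hρ.isOpen_preimage U hU

theorem continuous_ccgTopology_of_coreCompact {C : Type u} [TopologicalSpace C]
    (hC : CoreCompact C) {f : C → X} (hf : Continuous f) : Continuous[_, ccgTopology X] f :=
  continuous_def.2 fun _ hV => hV C _ hC f hf

theorem CCGenerated.continuous_ccgTopology {Y : Type u} [TopologicalSpace Y]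
    (hX : CCGenerated X) {f : X → Y} (hf : Continuous f) : Continuous[_, ccgTopology Y] f := by
  refine continuous_def.2 fun V hV => ?_
  rw [← hX]
  exact fun C _ hC ρ hρ => hV C _ hC (f ∘ ρ) (hf.comp hρ)

theorem Specializes.ccg {x y : X} (h : x ⤳ y) : @Specializes X (ccgTopology X) x y := by
  have hC : CoreCompact ({x, y} : Set X) := coreCompact_of_locallyCompactSpace
  have hxy : (⟨x, by simp⟩ : ({x, y} : Set X)) ⤳ ⟨y, by simp⟩ := (subtype_specializes_iff _ _).2 h
  exact @Specializes.map _ _ _ (ccgTopology X) _ _ _ hxy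
    (continuous_ccgTopology_of_coreCompact hC continuous_subtype_val)

theorem Filter.Tendsto.ccg {u : ℕ → X} {x : X} (h : Tendsto u atTop (𝓝 x)) :
    Tendsto u atTop (@nhds X (ccgTopology X) x) := by
  let f : OnePoint ℕ → X := fun c => c.elim x u
  have hf : Continuous f := (OnePoint.continuous_iff_from_nat f).2 h
  have hC : CoreCompact (ULift.{u} (OnePoint ℕ)) := coreCompact_of_locallyCompactSpace
  have hf' : Continuous[_, ccgTopology X] f :=
    @Continuous.comp _ _ _ _ _ (ccgTopology X) _ _
      (continuous_ccgTopology_of_coreCompact hC (hf.comp continuous_uliftDown)) continuous_uliftUp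
  exact (@OnePoint.continuous_iff_from_nat _ (ccgTopology X) f).1 hf'

end CoreCompactlyGenerated

section Saturated

variable {X : Type u} [TopologicalSpace X]

theorem saturated_nhdsKer (s : Set X) : Saturated (nhdsKer s) := by
  rw [Saturated, ← nhdsKer_def, nhdsKer_nhdsKer]

theorem Saturated.mem_of_specializes {K : Set X} (hK : Saturated K) {x y : X} (hxy : x ⤳ y)
    (hy : y ∈ K) : x ∈ K := by
  rw [hK, ← nhdsKer_def]
  exact mem_nhdsKer_iff_specializes.2 ⟨y, hy, hxy⟩

theorem OmegaWellFiltered.exists_specializes (hX : OmegaWellFiltered X) {L : ℕ → Set X}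
    (hanti : Antitone L) (hL : ∀ n, IsCompact (L n)) {C : Set X} (hC : IsClosed C)
    (hLC : ∀ n, (L n ∩ C).Nonempty) : ∃ z ∈ C, ∀ n, ∃ y ∈ L n, z ⤳ y := by
  by_contra! hno
  obtain ⟨n, hn⟩ := hX.2 (fun n => nhdsKer (L n))
    (fun n => ⟨((hLC n).mono inter_subset_left).mono subset_nhdsKer, (hL n).nhdsKer,
      saturated_nhdsKer _⟩)
    (fun m n => ⟨max m n, nhdsKer_mono (hanti (le_max_left m n)),
      nhdsKer_mono (hanti (le_max_right m n))⟩)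
    Cᶜ hC.isOpen_compl fun z hz hzC => by
      obtain ⟨n, hn⟩ := hno z hzC
      obtain ⟨y, hy, hzy⟩ := mem_nhdsKer_iff_specializes.1 (mem_iInter.1 hz n)
      exact hn y hy hzy
  obtain ⟨y, hyL, hyC⟩ := hLC n
  exact hn (subset_nhdsKer hyL) hyC

end Saturated

section WDomega

variable {X : Type u} [TopologicalSpace X]

theorem wdOmega_of_exists {A : Set X}
    (h : ∀ (Z : Type u) [TopologicalSpace Z], OmegaWellFiltered Z →
      ∀ g : X → Z, Continuous g → ∃ z, closure (g '' A) = closure {z}) :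
    WDomega X A := by
  intro Z _ hZ g hg
  obtain ⟨z, hz⟩ := h Z hZ g hg
  have := hZ.1
  exact ⟨z, hz, fun y hy => (inseparable_iff_closure_eq.2 (hy.symm.trans hz)).eq⟩

theorem wdOmega_closure_singleton (x : X) : WDomega X (closure {x}) :=
  wdOmega_of_exists fun _ _ _ g hg => ⟨g x, subset_antisymm
    (closure_minimal (by simpa using image_closure_subset_closure_image (s := {x}) hg)
      isClosed_closure)
    (closure_mono (singleton_subset_iff.2 ⟨x, subset_closure rfl, rfl⟩))⟩

end WDomega

namespace WFomega

variable {X : Type u} [TopologicalSpace X]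

instance : TopologicalSpace (WFomega X) := wfomegaTop X

/-- The basic open set `U^{ω-w}`. -/
def hit (U : Set X) : Set (WFomega X) := {A | (A.1 ∩ U).Nonempty}

theorem isOpen_hit {U : Set X} (hU : IsOpen U) : IsOpen (hit U) :=
  GenerateOpen.basic _ ⟨U, hU, rfl⟩

theorem tendsto_nhds_iff {ι : Type*} {l : Filter ι} {β : ι → WFomega X} {A : WFomega X} :
    Tendsto β l (𝓝 A) ↔ ∀ U, IsOpen U → A ∈ hit U → ∀ᶠ i in l, β i ∈ hit U := by
  have hnhds : 𝓝 A = ⨅ s ∈ {s | A ∈ s ∧ ∃ U, IsOpen U ∧ s = hit U}, 𝓟 s := nhds_generateFrom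
  simp only [hnhds, tendsto_iInf, tendsto_principal, mem_ofPred_eq, and_imp, forall_exists_index]
  exact ⟨fun h U hU hA => h _ hA U hU rfl, by rintro h _ hA U hU rfl; exact h U hU hA⟩

theorem specializes_of_subset {A B : WFomega X} (h : B.1 ⊆ A.1) : A ⤳ B := by
  refine specializes_iff_forall_open.2 fun s hs hB => ?_
  induction hs with
  | basic t ht =>
    obtain ⟨U, -, rfl⟩ := ht
    exact hB.mono (inter_subset_inter_left U h)
  | univ => trivial
  | inter _ _ _ _ ih₁ ih₂ => exact ⟨ih₁ hB.1, ih₂ hB.2⟩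
  | sUnion S _ ih =>
    obtain ⟨t, htS, hBt⟩ := hB
    exact ⟨t, htS, ih t htS hBt⟩

theorem subset_of_specializes {A B : WFomega X} (h : A ⤳ B) : B.1 ⊆ A.1 := by
  intro x hxB
  by_contra hxA
  obtain ⟨y, hyA, hyA'⟩ := h.mem_open (isOpen_hit A.2.1.isOpen_compl) ⟨x, hxB, hxA⟩
  exact hyA' hyA

instance : T0Space (WFomega X) :=
  (t0Space_iff_inseparable _).2 fun _ _ h => Subtype.ext <|
    (subset_of_specializes h.specializes').antisymm (subset_of_specializes h.specializes)

theorem specializes_ccg_iff_subset {A B : WFomega X} :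
    @Specializes _ (ccgTopology (WFomega X)) A B ↔ B.1 ⊆ A.1 :=
  ⟨fun h => subset_of_specializes
      (@Specializes.map _ _ (ccgTopology _) _ _ _ _ h (continuous_id_of_le ccgTopology_le)),
    fun h => (specializes_of_subset h).ccg⟩

theorem t0Space_ccg : @T0Space (WFomega X) (ccgTopology (WFomega X)) :=
  @t0Space_of_injective_of_continuous _ _ (ccgTopology _) _ id Function.injective_id
    (continuous_id_of_le ccgTopology_le) _

def eta (x : X) : WFomega X := ⟨closure {x}, isClosed_closure, wdOmega_closure_singleton x⟩

theorem mem_eta (x : X) : x ∈ (eta x).1 := subset_closure rfl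

theorem preimage_eta_hit {U : Set X} (hU : IsOpen U) : eta ⁻¹' hit U = U := by
  ext x
  refine ⟨fun ⟨y, hyx, hyU⟩ => ?_, fun hx => ⟨x, mem_eta x, hx⟩⟩
  exact (specializes_iff_mem_closure.2 hyx).mem_open hU hyU

theorem continuous_eta : Continuous (eta : X → WFomega X) :=
  continuous_generateFrom_iff.2 fun _ ⟨_, hU, h⟩ => h ▸ (preimage_eta_hit hU).symm ▸ hU

theorem specializes_eta {A : WFomega X} {a : X} (ha : a ∈ A.1) : A ⤳ eta a :=
  specializes_of_subset (closure_minimal (singleton_subset_iff.2 ha) A.2.1)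

section Lift

variable {Z : Type u} [TopologicalSpace Z] (hZ : OmegaWellFiltered Z) {g : X → Z}
  (hg : Continuous g)

noncomputable def lift (A : WFomega X) : Z := (A.2.2 Z _ hZ g hg).exists.choose

theorem closure_image_eq_closure_lift (A : WFomega X) :
    closure (g '' A.1) = closure {lift hZ hg A} :=
  (A.2.2 Z _ hZ g hg).exists.choose_spec

theorem lift_mem_closure_image (A : WFomega X) : lift hZ hg A ∈ closure (g '' A.1) :=
  closure_image_eq_closure_lift hZ hg A ▸ subset_closure rfl

theorem image_subset_closure_lift (A : WFomega X) : g '' A.1 ⊆ closure {lift hZ hg A} :=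
  closure_image_eq_closure_lift hZ hg A ▸ subset_closure

theorem preimage_lift {V : Set Z} (hV : IsOpen V) : lift hZ hg ⁻¹' V = hit (g ⁻¹' V) := by
  ext A
  rw [mem_preimage, hit, mem_ofPred_eq, ← image_inter_nonempty_iff,
    ← closure_inter_open_nonempty_iff hV, closure_image_eq_closure_lift,
    closure_inter_open_nonempty_iff hV, singleton_inter_nonempty]

theorem continuous_lift : Continuous (lift hZ hg) :=
  continuous_def.2 fun _ hV => preimage_lift hZ hg hV ▸ isOpen_hit (hV.preimage hg)

end Lift

def below (F : Set X) : Set (WFomega X) := {B | B.1 ⊆ F}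

theorem isClosed_below {F : Set X} (hF : IsClosed F) : IsClosed (below F) := by
  have : below F = (hit Fᶜ)ᶜ := by
    ext B
    simp [below, hit, inter_compl_nonempty_iff]
  exact this ▸ (isOpen_hit hF.isOpen_compl).isClosed_compl

section Rudin

variable {ι : Type*} (M : ι → Set (WFomega X))

def MeetsBelow (F : Set X) : Prop := IsClosed F ∧ ∀ i, (M i ∩ below F).Nonempty

variable {M}

theorem meetsBelow_sInter_of_isChain (hM : ∀ i, IsCompact (M i)) {c : Set (Set X)}
    (hc : ∀ F ∈ c, MeetsBelow M F) (hchain : IsChain (· ⊆ ·) c) (hne : c.Nonempty) :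
    MeetsBelow M (⋂₀ c) := by
  refine ⟨isClosed_sInter fun F hF => (hc F hF).1, fun i => ?_⟩
  by_contra hempty
  have hcover : M i ⊆ ⋃ F : c, hit (F : Set X)ᶜ := fun B hB => by
    obtain ⟨x, hxB, hx⟩ := not_subset.1 fun h => hempty ⟨B, hB, h⟩
    obtain ⟨F, hF, hxF⟩ := not_forall₂.1 (mt mem_sInter.2 hx)
    exact mem_iUnion.2 ⟨⟨F, hF⟩, x, hxB, hxF⟩
  have : Nonempty c := hne.to_subtype
  obtain ⟨F, hF⟩ := (hM i).elim_directed_cover (fun F : c => hit (F : Set X)ᶜ)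
    (fun F => isOpen_hit (hc F F.2).1.isOpen_compl) hcover fun F G =>
      (hchain.total F.2 G.2).elim
        (fun h => ⟨F, subset_rfl, fun _ ⟨x, hxB, hx⟩ => ⟨x, hxB, fun hxF => hx (h hxF)⟩⟩)
        (fun h => ⟨G, fun _ ⟨x, hxB, hx⟩ => ⟨x, hxB, fun hxG => hx (h hxG)⟩, subset_rfl⟩)
  obtain ⟨B, hBM, hBF⟩ := (hc F F.2).2 i
  obtain ⟨x, hxB, hxF⟩ := hF hBM
  exact hxF (hBF hxB)

theorem exists_minimal_meetsBelow (hM : ∀ i, IsCompact (M i)) (hne : ∀ i, (M i).Nonempty) :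
    ∃ A, Minimal (MeetsBelow M) A := by
  obtain ⟨A, -, hA⟩ := zorn_superset_nonempty {F | MeetsBelow M F}
    (fun c hcS hchain hcne => ⟨⋂₀ c, meetsBelow_sInter_of_isChain hM hcS hchain hcne,
      fun _ => sInter_subset_of_mem⟩)
    univ ⟨isClosed_univ, fun i => (hne i).mono fun B hB => ⟨hB, subset_univ _⟩⟩
  exact ⟨A, hA⟩

end Rudin

section Minimal

variable {M : ℕ → Set (WFomega X)} {A₀ : Set X}

theorem subset_of_minimal_of_frequently (hanti : Antitone M) (hmin : Minimal (MeetsBelow M) A₀)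
    {F : Set X} (hF : IsClosed F)
    (h : ∃ᶠ n in atTop, (M n ∩ below (A₀ ∩ F)).Nonempty) : A₀ ⊆ F := by
  refine (hmin.2 ⟨hmin.1.1.inter hF, fun n => ?_⟩ inter_subset_left).trans inter_subset_right
  obtain ⟨k, hnk, hk⟩ := frequently_atTop.1 h n
  exact hk.mono (inter_subset_inter_left _ (hanti hnk))

theorem wdOmega_of_minimal (hanti : Antitone M) (hM : ∀ n, IsCompact (M n))
    (hmin : Minimal (MeetsBelow M) A₀) : WDomega X A₀ := by
  refine wdOmega_of_exists fun Z _ hZ g hg => ?_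
  obtain ⟨z, hzA₀, hz⟩ := hZ.exists_specializes (L := fun n => lift hZ hg '' (M n ∩ below A₀))
    (fun _ _ h => image_mono (inter_subset_inter_left _ (hanti h)))
    (fun n => ((hM n).inter_right (isClosed_below hmin.1.1)).image (continuous_lift hZ hg))
    isClosed_closure fun n => by
      obtain ⟨B, hB⟩ := hmin.1.2 n
      exact ⟨_, mem_image_of_mem _ hB,
        closure_mono (image_mono hB.2) (lift_mem_closure_image hZ hg B)⟩
  have hA₀z : A₀ ⊆ g ⁻¹' closure {z} :=
    subset_of_minimal_of_frequently hanti hmin (isClosed_closure.preimage hg)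
      (Frequently.of_forall fun n => by
        obtain ⟨_, ⟨B, hB, rfl⟩, hzB⟩ := hz n
        exact ⟨B, hB.1, subset_inter hB.2 fun b hb => specializes_iff_closure_subset.1 hzB
          (image_subset_closure_lift hZ hg B (mem_image_of_mem g hb))⟩)
  exact ⟨z, subset_antisymm (closure_minimal (image_subset_iff.2 hA₀z) isClosed_closure)
    (closure_minimal (singleton_subset_iff.2 hzA₀) isClosed_closure)⟩

theorem tendsto_of_minimal {A : WFomega X} (hanti : Antitone M)
    (hmin : Minimal (MeetsBelow M) A.1) {β : ℕ → WFomega X} (hβ : ∀ n, β n ∈ M n ∩ below A.1) :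
    Tendsto β atTop (𝓝 A) := by
  refine tendsto_nhds_iff.2 fun U hU hAU => ?_
  by_contra h
  obtain ⟨x, hxA, hxU⟩ := hAU
  refine subset_of_minimal_of_frequently hanti hmin hU.isClosed_compl ?_ hxA hxU
  exact (not_eventually.1 h).mono fun n hn =>
    ⟨β n, (hβ n).1, subset_inter (hβ n).2 fun y hy hyU => hn ⟨y, hy, hyU⟩⟩

end Minimal

theorem exists_subset_of_antitone_ccg {K : ℕ → Set (WFomega X)} (hanti : Antitone K)
    (hK : ∀ n, @IsCompact _ (ccgTopology (WFomega X)) (K n))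
    (hsat : ∀ n, @Saturated _ (ccgTopology (WFomega X)) (K n)) {W : Set (WFomega X)}
    (hW : IsOpen[ccgTopology (WFomega X)] W) (hKW : ⋂ n, K n ⊆ W) : ∃ n, K n ⊆ W := by
  by_contra! hno
  let M n := K n \ W
  have hManti : Antitone M := fun _ _ h => sdiff_subset_sdiff_left (hanti h)
  have hM : ∀ n, IsCompact (M n) := fun n => by
    simpa using @IsCompact.image _ _ (ccgTopology _) _ _ id
      (@IsCompact.diff _ (ccgTopology _) _ _ (hK n) hW) (continuous_id_of_le ccgTopology_le)
  obtain ⟨A₀, hmin⟩ := exists_minimal_meetsBelow hM fun n => sdiff_nonempty.2 (hno n)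
  choose β hβ using hmin.1.2
  let A : WFomega X := ⟨A₀, hmin.1.1, wdOmega_of_minimal hManti hM hmin⟩
  have hAK : ∀ n, A ∈ K n := fun n =>
    @Saturated.mem_of_specializes _ (ccgTopology _) _ (hsat n) A (β n)
      (specializes_ccg_iff_subset.2 (hβ n).2) (hβ n).1.1
  obtain ⟨n, hn⟩ := ((tendsto_of_minimal (A := A) hManti hmin hβ).ccg.eventually_mem
    (@IsOpen.mem_nhds _ (ccgTopology _) _ _ hW (hKW (mem_iInter.2 hAK)))).exists
  exact (hβ n).1.2 hn

theorem omegaWellFiltered_ccg : @OmegaWellFiltered (WFomega X) (ccgTopology (WFomega X)) := by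
  refine ⟨t0Space_ccg, fun K hK hdir W hW hKW => ?_⟩
  have hdir' : Directed (· ⊇ ·) K := hdir
  obtain ⟨n, hn⟩ := exists_subset_of_antitone_ccg hdir'.sequence_anti (fun _ => (hK _).2.1)
    (fun _ => (hK _).2.2) hW fun x hx =>
      hKW (mem_iInter.2 fun n => hdir'.sequence_le n (mem_iInter.1 hx (n + 1)))
  exact ⟨_, hn⟩

theorem mem_closure_image_eta (hX : CCGenerated X) (A : WFomega X) :
    A ∈ closure[ccgTopology (WFomega X)] (eta '' A.1) := by
  obtain ⟨z, hz, -⟩ := A.2.2 _ (ccgTopology _) omegaWellFiltered_ccg eta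
    (hX.continuous_ccgTopology continuous_eta)
  have hAz : A.1 ⊆ z.1 := fun a ha => by
    have : eta a ∈ closure[ccgTopology (WFomega X)] {z} :=
      hz ▸ @subset_closure _ (ccgTopology _) _ _ (mem_image_of_mem eta ha)
    exact specializes_ccg_iff_subset.1
      ((@specializes_iff_mem_closure _ (ccgTopology _) _ _).2 this) (mem_eta a)
  rw [hz]
  exact (@specializes_iff_mem_closure _ (ccgTopology _) _ _).1 (specializes_ccg_iff_subset.2 hAz)

theorem eq_hit_preimage_eta (hX : CCGenerated X) {W : Set (WFomega X)}
    (hW : IsOpen[ccgTopology (WFomega X)] W) : W = hit (eta ⁻¹' W) := by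
  ext A
  refine ⟨fun hA => ?_, fun ⟨a, ha, haW⟩ =>
    @Specializes.mem_open _ (ccgTopology _) _ _ _ (specializes_eta ha).ccg hW haW⟩
  obtain ⟨_, hW', a, ha, rfl⟩ :=
    (@mem_closure_iff _ (ccgTopology _) _ _).1 (mem_closure_image_eta hX A) W hW hA
  exact ⟨a, ha, hW'⟩

end WFomega

theorem stmt9_general {X : Type u} [TopologicalSpace X] (h : CCGenerated X) :
    @CCGenerated (WFomega X) (wfomegaTop X) := by
  refine le_antisymm ccgTopology_le (TopologicalSpace.le_def.2 fun W hW => ?_)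
  rw [WFomega.eq_hit_preimage_eta h hW]
  exact WFomega.isOpen_hit <| @Continuous.isOpen_preimage _ _ _ (ccgTopology _) _
    (h.continuous_ccgTopology WFomega.continuous_eta) W hW

/-- the standard ω-well-filterification of a core compactly generated space
is again core compactly generated. -/
theorem stmt9 {X : Type u} [TopologicalSpace X] [T0Space X] (h : CCGenerated X) :
    @CCGenerated (WFomega X) (wfomegaTop X) :=
  stmt9_general h
end
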